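/- Let 0 ≤ λ, μ ≤ 1/2 and define F : ℝ → ℝ by F(x) = 0 for x < 0; F(x) = 1 − 2(λ+μ)cos(πx) + 2(2cos(πx) − πx·sin(πx))·λμ for 0 ≤ x < 1/2; F(x) = 1 + 2π(x−1)·λμ·sin(πx) for 1/2 ≤ x < 1; and F(x) = 1 for x ≥ 1. Then F is monotone nondecreasing, right-continuous, F(−∞) = 0 and F(+∞) = 1, i.e. F is a cumulative distribution function. -/

import Mathlib

/-!
Write `s = λ + μ`, `p = λ μ`. On `[0, 1/2]` the derivative of the middle piece is
`2π ((s - 3p) sin t - p t cos t)` with `t = π x`; it is nonnegative because `t cos t ≤ sin t`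
(i.e. `t ≤ tan t`) and `s - 3p ≥ p ≥ 0`, the latter being `λ (1 - 2μ) + μ (1 - 2λ) ≥ 0`.
On `[1/2, 1]` the derivative `2π p (sin t + π (x - 1) cos t)` is nonnegative since `cos t ≤ 0`.
The pieces agree at `1/2` (value `1 - π p`) and at `1` (value `1`), and the jump at `0` is
`(1 - 2λ)(1 - 2μ) ≥ 0`.
-/

open Real Set Filter Topology

theorem Real.mul_cos_le_sin {t : ℝ} (h0 : 0 ≤ t) (h1 : t < π / 2) : t * cos t ≤ sin t := by
  have hcos : 0 < cos t := cos_pos_of_mem_Ioo ⟨by linarith [pi_pos], h1⟩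
  simpa [tan_eq_sin_div_cos, le_div_iff₀ hcos] using le_tan h0 h1

section Gluing

variable {α β : Type*} [LinearOrder α] {f g : α → β} {a : α}

theorem MonotoneOn.ite_lt [Preorder β] {s : Set α} (ha : a ∈ s)
    (hf : MonotoneOn f (s ∩ Iic a)) (hg : MonotoneOn g (s ∩ Ici a)) (hfg : f a ≤ g a) :
    MonotoneOn (fun x ↦ if x < a then f x else g x) s := by
  intro x hx y hy hxy
  dsimp only
  split_ifs with hxa hya hya
  · exact hf ⟨hx, hxa.le⟩ ⟨hy, hya.le⟩ hxy
  · calc f x ≤ f a := hf ⟨hx, hxa.le⟩ ⟨ha, le_rfl⟩ hxa.le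
      _ ≤ g a := hfg
      _ ≤ g y := hg ⟨ha, le_rfl⟩ ⟨hy, not_lt.1 hya⟩ (not_lt.1 hya)
  · exact absurd (hxy.trans_lt hya) hxa
  · exact hg ⟨hx, not_lt.1 hxa⟩ ⟨hy, not_lt.1 hya⟩ hxy

theorem ContinuousWithinAt.ite_lt_Ici [TopologicalSpace α] [OrderTopology α] [TopologicalSpace β]
    {x : α} (hf : x < a → ContinuousWithinAt f (Ici x) x)
    (hg : a ≤ x → ContinuousWithinAt g (Ici x) x) :
    ContinuousWithinAt (fun y ↦ if y < a then f y else g y) (Ici x) x := by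
  rcases lt_or_ge x a with hxa | hax
  · refine (hf hxa).congr_of_eventuallyEq ?_ (if_pos hxa)
    filter_upwards [mem_nhdsWithin_of_mem_nhds (Iio_mem_nhds hxa)] with y hy using if_pos hy
  · refine (hg hax).congr_of_eventuallyEq ?_ (if_neg (not_lt.2 hax))
    filter_upwards [self_mem_nhdsWithin] with y hy using if_neg (not_lt.2 (hax.trans hy))

end Gluing

noncomputable def lowerPiece (s p x : ℝ) : ℝ :=
  1 - 2 * s * cos (π * x) + 2 * (2 * cos (π * x) - π * x * sin (π * x)) * p

noncomputable def upperPiece (p x : ℝ) : ℝ :=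
  1 + 2 * π * (x - 1) * p * sin (π * x)

theorem hasDerivAt_lowerPiece (s p x : ℝ) :
    HasDerivAt (lowerPiece s p)
      (2 * π * ((s - 3 * p) * sin (π * x) - p * (π * x) * cos (π * x))) x := by
  have hπx : HasDerivAt (fun y ↦ π * y) π x := by simpa using (hasDerivAt_id x).const_mul π
  have := (((hπx.cos.const_mul 2).sub (hπx.mul hπx.sin)).const_mul 2).mul_const p
  exact (((hπx.cos.const_mul (2 * s)).const_sub 1).add this).congr_deriv (by ring)

theorem hasDerivAt_upperPiece (p x : ℝ) :
    HasDerivAt (upperPiece p)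
      (2 * π * p * (sin (π * x) + π * (x - 1) * cos (π * x))) x := by
  have hπx : HasDerivAt (fun y ↦ π * y) π x := by simpa using (hasDerivAt_id x).const_mul π
  have hlin : HasDerivAt (fun y ↦ 2 * π * (y - 1) * p) (2 * π * p) x := by
    simpa using (((hasDerivAt_id x).sub_const 1).const_mul (2 * π)).mul_const p
  exact ((hlin.mul hπx.sin).const_add 1).congr_deriv (by ring)

theorem lowerPiece_zero (s p : ℝ) : lowerPiece s p 0 = 1 - 2 * s + 4 * p := by
  simp only [lowerPiece, mul_zero, cos_zero, sin_zero]; ring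

theorem lowerPiece_half (s p : ℝ) : lowerPiece s p (1 / 2) = 1 - π * p := by
  rw [lowerPiece, mul_one_div, cos_pi_div_two, sin_pi_div_two]; ring

theorem upperPiece_half (p : ℝ) : upperPiece p (1 / 2) = 1 - π * p := by
  rw [upperPiece, mul_one_div, sin_pi_div_two]; ring

theorem upperPiece_one (p : ℝ) : upperPiece p 1 = 1 := by
  simp [upperPiece]

theorem lowerPiece_monotoneOn {s p : ℝ} (hp : 0 ≤ p) (hps : 4 * p ≤ s) :
    MonotoneOn (lowerPiece s p) (Icc 0 (1 / 2)) := by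
  refine monotoneOn_of_hasDerivWithinAt_nonneg (convex_Icc _ _)
    (fun x _ ↦ (hasDerivAt_lowerPiece s p x).continuousAt.continuousWithinAt)
    (fun x _ ↦ (hasDerivAt_lowerPiece s p x).hasDerivWithinAt) fun x hx ↦ ?_
  rw [interior_Icc] at hx
  have ht0 : 0 ≤ π * x := by nlinarith [pi_pos, hx.1]
  have ht1 : π * x < π / 2 := by nlinarith [pi_pos, hx.2]
  have htcos : 0 ≤ π * x * cos (π * x) :=
    mul_nonneg ht0 (cos_nonneg_of_mem_Icc ⟨by linarith [pi_pos], ht1.le⟩)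
  have key : p * (π * x * cos (π * x)) ≤ (s - 3 * p) * sin (π * x) :=
    calc p * (π * x * cos (π * x))
        ≤ (s - 3 * p) * (π * x * cos (π * x)) := mul_le_mul_of_nonneg_right (by linarith) htcos
      _ ≤ (s - 3 * p) * sin (π * x) :=
        mul_le_mul_of_nonneg_left (mul_cos_le_sin ht0 ht1) (by linarith)
  rw [mul_assoc p]
  exact mul_nonneg (by positivity) (sub_nonneg.2 key)

theorem upperPiece_monotoneOn {p : ℝ} (hp : 0 ≤ p) :
    MonotoneOn (upperPiece p) (Icc (1 / 2) 1) := by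
  refine monotoneOn_of_hasDerivWithinAt_nonneg (convex_Icc _ _)
    (fun x _ ↦ (hasDerivAt_upperPiece p x).continuousAt.continuousWithinAt)
    (fun x _ ↦ (hasDerivAt_upperPiece p x).hasDerivWithinAt) fun x hx ↦ ?_
  rw [interior_Icc] at hx
  have hsin : 0 ≤ sin (π * x) :=
    sin_nonneg_of_nonneg_of_le_pi (by nlinarith [pi_pos, hx.1]) (by nlinarith [pi_pos, hx.2])
  have hcos : cos (π * x) ≤ 0 :=
    cos_nonpos_of_pi_div_two_le_of_le (by nlinarith [pi_pos, hx.1]) (by nlinarith [pi_pos, hx.2])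
  have : 0 ≤ π * (x - 1) * cos (π * x) :=
    mul_nonneg_of_nonpos_of_nonpos
      (mul_nonpos_of_nonneg_of_nonpos pi_pos.le (by linarith [hx.2])) hcos
  positivity

noncomputable def trigCDF (s p : ℝ) (x : ℝ) : ℝ :=
  if x < 0 then 0
  else if x < 1 / 2 then lowerPiece s p x
  else if x < 1 then upperPiece p x
  else 1

theorem trigCDF_monotone {s p : ℝ} (hp : 0 ≤ p) (hps : 4 * p ≤ s) (hs : 2 * s ≤ 1 + 4 * p) :
    Monotone (trigCDF s p) := by
  have hupper : MonotoneOn (fun x ↦ if x < 1 then upperPiece p x else 1) (Ici (1 / 2)) :=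
    .ite_lt (by norm_num) (by rw [Ici_inter_Iic]; exact upperPiece_monotoneOn hp) monotoneOn_const
      (upperPiece_one p).le
  have hmiddle : MonotoneOn
      (fun x ↦ if x < 1 / 2 then lowerPiece s p x else if x < 1 then upperPiece p x else 1)
      (Ici 0) :=
    .ite_lt (by norm_num) (by rw [Ici_inter_Iic]; exact lowerPiece_monotoneOn hp hps)
      (hupper.mono inter_subset_right)
      (by norm_num [lowerPiece_half, upperPiece_half])
  refine monotoneOn_univ.1 <| .ite_lt (mem_univ 0) monotoneOn_const
    (hmiddle.mono inter_subset_right) ?_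
  norm_num [lowerPiece_zero]
  linarith

theorem trigCDF_continuousWithinAt_Ici (s p x : ℝ) :
    ContinuousWithinAt (trigCDF s p) (Ici x) x :=
  .ite_lt_Ici (fun _ ↦ continuousWithinAt_const) fun _ ↦
    .ite_lt_Ici (fun _ ↦ (hasDerivAt_lowerPiece s p x).continuousAt.continuousWithinAt) fun _ ↦
    .ite_lt_Ici (fun _ ↦ (hasDerivAt_upperPiece p x).continuousAt.continuousWithinAt) fun _ ↦
    continuousWithinAt_const

theorem trigCDF_tendsto_atBot (s p : ℝ) : Tendsto (trigCDF s p) atBot (𝓝 0) :=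
  tendsto_const_nhds.congr' <| by
    filter_upwards [eventually_lt_atBot 0] with x hx using (if_pos hx).symm

theorem trigCDF_tendsto_atTop (s p : ℝ) : Tendsto (trigCDF s p) atTop (𝓝 1) :=
  tendsto_const_nhds.congr' <| by
    filter_upwards [eventually_ge_atTop 1] with x hx
    rw [trigCDF, if_neg (by linarith), if_neg (by linarith), if_neg (not_lt.2 hx)]

theorem stmt_9 (lam mu : ℝ) (hl0 : 0 ≤ lam) (hl1 : lam ≤ 1/2)
    (hm0 : 0 ≤ mu) (hm1 : mu ≤ 1/2)
    (F : ℝ → ℝ)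
    (hF : ∀ x : ℝ, F x =
      if x < 0 then 0
      else if x < 1/2 then
        1 - 2 * (lam + mu) * Real.cos (Real.pi * x) +
          2 * (2 * Real.cos (Real.pi * x) - Real.pi * x * Real.sin (Real.pi * x)) * (lam * mu)
      else if x < 1 then 1 + 2 * Real.pi * (x - 1) * (lam * mu) * Real.sin (Real.pi * x)
      else 1) :
    Monotone F ∧
    (∀ x : ℝ, ContinuousWithinAt F (Set.Ici x) x) ∧
    Filter.Tendsto F Filter.atBot (nhds 0) ∧
    Filter.Tendsto F Filter.atTop (nhds 1) := by
  obtain rfl : F = trigCDF (lam + mu) (lam * mu) := funext hF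
  have hlam : 0 ≤ 1 - 2 * lam := by linarith
  have hmu : 0 ≤ 1 - 2 * mu := by linarith
  refine ⟨trigCDF_monotone (mul_nonneg hl0 hm0) ?_ ?_, trigCDF_continuousWithinAt_Ici _ _,
    trigCDF_tendsto_atBot _ _, trigCDF_tendsto_atTop _ _⟩
  · nlinarith [mul_nonneg hl0 hmu, mul_nonneg hm0 hlam]
  · nlinarith [mul_nonneg hlam hmu]
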